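/- arXiv:1906.07228 — 2 statements merged into one kernel-verified Lean document; each statement's English description precedes it below -/
import Mathlib

section
/- Let δ > 0 (playing the role of ε^{2p}) and a > 0, and set b = 2a + δ. Then there exists a unique T > 0 such that 2a e^{4T} − b e^{-2T} = δ; moreover T ≤ δ/(6a). -/
/-!
Under the Liouville flow `(x, y) ↦ (e^{2T} x, e^{-T} y)` the quantities `a` and `b` scale by `e^{4T}`
and `e^{-2T}`, so the level `2a - b` becomes `flowLevel a b T`. It is strictly increasing in `T` and
equals `2a - b = -δ` at `T = 0`, so it crosses `δ` exactly once, at some `T > 0`. Writing `u = e^{2T}`, the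
crossing condition becomes `2a (u³ - 1) = δ (u + 1)`; since `u² + u + 1 ≥ 3(u + 1)/2` for `u ≥ 1`,
this forces `3a (u - 1) ≤ δ`, and `2T ≤ e^{2T} - 1 = u - 1` gives `T ≤ δ / (6a)`.
-/

open Real Set

noncomputable section

def flowLevel (a b T : ℝ) : ℝ := 2 * a * exp (4 * T) - b * exp (-(2 * T))

variable {a b δ : ℝ}

theorem strictMono_flowLevel (ha : 0 < a) (hb : 0 ≤ b) : StrictMono (flowLevel a b) := by
  have hgrow : StrictMono fun T : ℝ => 2 * a * exp (4 * T) :=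
    fun s t hst => mul_lt_mul_of_pos_left (exp_lt_exp.2 (by linarith)) (by positivity)
  have hdecay : Monotone fun T : ℝ => -(b * exp (-(2 * T))) :=
    fun s t hst => neg_le_neg (mul_le_mul_of_nonneg_left (exp_le_exp.2 (by linarith)) hb)
  convert hgrow.add_monotone hdecay using 1
  ext T
  exact sub_eq_add_neg _ _

theorem continuous_flowLevel : Continuous (flowLevel a b) := by
  unfold flowLevel
  fun_prop

theorem flowLevel_zero : flowLevel a b 0 = 2 * a - b := by
  simp [flowLevel]

theorem flowLevel_ge (ha : 0 ≤ a) (hb : 0 ≤ b) {T : ℝ} (hT : 0 ≤ T) :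
    2 * a * (1 + 4 * T) - b ≤ flowLevel a b T := by
  have hgrow : 1 + 4 * T ≤ exp (4 * T) := by linarith [add_one_le_exp (4 * T)]
  have hdecay : exp (-(2 * T)) ≤ 1 := exp_le_one_iff.2 (by linarith)
  unfold flowLevel
  gcongr
  · exact mul_le_of_le_one_right hb hdecay

theorem exists_pos_flowLevel_eq (ha : 0 < a) (hδ : 0 < δ) :
    ∃ T, 0 < T ∧ flowLevel a (2 * a + δ) T = δ := by
  set M := δ / (4 * a)
  have hM : 0 < M := by positivity
  have hfM : δ ≤ flowLevel a (2 * a + δ) M := by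
    have h4aM : 4 * a * M = δ := by simp only [M]; field_simp
    linarith [flowLevel_ge (b := 2 * a + δ) ha.le (by positivity) hM.le]
  have hδ_mem : δ ∈ Icc (flowLevel a (2 * a + δ) 0) (flowLevel a (2 * a + δ) M) :=
    ⟨by rw [flowLevel_zero]; linarith, hfM⟩
  obtain ⟨T, hT, hfT⟩ := intermediate_value_Icc hM.le continuous_flowLevel.continuousOn hδ_mem
  refine ⟨T, lt_of_le_of_ne hT.1 ?_, hfT⟩
  rintro rfl
  rw [flowLevel_zero] at hfT
  linarith

theorem three_mul_sub_one_le_of_cube_eq (ha : 0 ≤ a) {u : ℝ} (hu : 1 ≤ u)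
    (h : 2 * a * (u ^ 3 - 1) = δ * (u + 1)) : 3 * a * (u - 1) ≤ δ := by
  have hquad : 3 * (u + 1) ≤ 2 * (u ^ 2 + u + 1) := by nlinarith
  have hfactor : 2 * a * (u ^ 3 - 1) = a * (u - 1) * (2 * (u ^ 2 + u + 1)) := by ring
  have : 3 * a * (u - 1) * (u + 1) ≤ δ * (u + 1) := by
    rw [← h, hfactor]
    nlinarith [mul_nonneg ha (sub_nonneg.2 hu)]
  exact le_of_mul_le_mul_right this (by linarith)

theorem le_of_flowLevel_eq (ha : 0 < a) {T : ℝ} (hT : 0 < T)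
    (h : flowLevel a (2 * a + δ) T = δ) : T ≤ δ / (6 * a) := by
  set u := exp (2 * T)
  have hu : 1 ≤ u := one_le_exp (by linarith)
  have hcube : 2 * a * (u ^ 3 - 1) = δ * (u + 1) := by
    have h4 : exp (4 * T) = u ^ 2 := by rw [← exp_nat_mul]; ring_nf
    have h2 : exp (-(2 * T)) = u⁻¹ := exp_neg _
    rw [flowLevel, h4, h2] at h
    field_simp at h
    linarith
  have hlin : 2 * T ≤ u - 1 := by linarith [add_one_le_exp (2 * T)]
  rw [le_div_iff₀ (by positivity)]
  nlinarith [three_mul_sub_one_le_of_cube_eq ha.le hu hcube]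

end

/-- For `δ > 0`, `a > 0`, and `b = 2a + δ`, there is a unique `T > 0` with
`2a e^{4T} − b e^{-2T} = δ`; moreover any such `T` satisfies `T ≤ δ/(6a)`. -/
theorem stmt_14 (δ a : ℝ) (hδ : 0 < δ) (ha : 0 < a) (b : ℝ) (hb : b = 2 * a + δ) :
    (∃! T : ℝ, 0 < T ∧ 2 * a * Real.exp (4 * T) - b * Real.exp (-(2 * T)) = δ) ∧
      ∀ T : ℝ, 0 < T → 2 * a * Real.exp (4 * T) - b * Real.exp (-(2 * T)) = δ →
        T ≤ δ / (6 * a) := by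
  subst hb
  obtain ⟨T, hT, hfT⟩ := exists_pos_flowLevel_eq ha hδ
  have hinj := (strictMono_flowLevel (b := 2 * a + δ) ha (by positivity)).injective
  exact ⟨⟨T, ⟨hT, hfT⟩, fun S hS => hinj (hS.2.trans hfT.symm)⟩,
    fun S hS hfS => le_of_flowLevel_eq ha hS hfS⟩
end

section
/- Let ε > 0 and let β : ℝ_{≥0} → [0,1] be smooth with β' ≥ 0. For (x, y) ∈ ℝⁿ × ℝⁿ with (x1, y1) ≠ (0, 0), writing r2 = √(|x2|² + |y2|²), the quantity 2x1² + y1² + ε^{2s} β(r2)(2|x2|² + |y2|²) + ε^{2s}(2|x2|² − |y2|²)² β'(r2)/r2 (with the last term interpreted as 0 when r2 = 0) is strictly positive. Hence the Liouville vector field v = 2x·∂x − y·∂y is transverse to the flattened hypersurfaces V̂_{±ε} = {2x1² − y1² + β(r2) ε^{2s}(2|x2|² − |y2|²) = ±ε^{2p}} away from {x1 = y1 = 0}. -/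
/-- Away from `{x1 = y1 = 0}`, the pairing of the Liouville field with the normal
of the flattened hypersurfaces `V̂_{±ε}` (cut off by a nondecreasing function
`β` with values in `[0,1]`) is strictly positive; hence the Liouville field is
transverse to `V̂_{±ε}` there. -/
theorem stmt_19 (ε : ℝ) (hε : 0 < ε) (s : ℕ) (hs : 0 < s) (m : ℕ)
    (β : ℝ → ℝ) (hβ : ContDiff ℝ (⊤ : ℕ∞) β)
    (hβ0 : ∀ r, 0 ≤ r → 0 ≤ β r) (hβ1 : ∀ r, 0 ≤ r → β r ≤ 1)
    (hβ' : ∀ r, 0 ≤ r → 0 ≤ deriv β r)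
    (x1 y1 : ℝ) (x2 y2 : EuclideanSpace ℝ (Fin m))
    (hne : ¬(x1 = 0 ∧ y1 = 0)) :
    let r2 : ℝ := Real.sqrt (‖x2‖ ^ 2 + ‖y2‖ ^ 2)
    0 < 2 * x1 ^ 2 + y1 ^ 2 + ε ^ (2 * s) * β r2 * (2 * ‖x2‖ ^ 2 + ‖y2‖ ^ 2) +
        (if r2 = 0 then 0
         else ε ^ (2 * s) * (2 * ‖x2‖ ^ 2 - ‖y2‖ ^ 2) ^ 2 * deriv β r2 / r2) := by
  intro r2
  have hr2 : 0 ≤ r2 := Real.sqrt_nonneg _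
  have hεp : 0 ≤ ε ^ (2 * s) := by positivity
  have h1 : 0 < 2 * x1 ^ 2 + y1 ^ 2 := by
    rcases not_and_or.mp hne with h | h
    · have : 0 < x1 ^ 2 := pow_pos (abs_pos.mpr h) 2 |>.trans_le (by rw [sq_abs])
      nlinarith [sq_nonneg y1]
    · have : 0 < y1 ^ 2 := pow_pos (abs_pos.mpr h) 2 |>.trans_le (by rw [sq_abs])
      nlinarith [sq_nonneg x1]
  have h2 : 0 ≤ ε ^ (2 * s) * β r2 * (2 * ‖x2‖ ^ 2 + ‖y2‖ ^ 2) := by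
    have := hβ0 r2 hr2
    positivity
  have h3 : 0 ≤ (if r2 = 0 then (0:ℝ)
      else ε ^ (2 * s) * (2 * ‖x2‖ ^ 2 - ‖y2‖ ^ 2) ^ 2 * deriv β r2 / r2) := by
    split_ifs with h
    · exact le_refl 0
    · have hr2' : 0 < r2 := lt_of_le_of_ne hr2 (Ne.symm h)
      exact div_nonneg (mul_nonneg (mul_nonneg hεp (sq_nonneg _)) (hβ' r2 hr2)) hr2
  linarith
end
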